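/- Let n ≥ 1, λ ∈ ℝ with λ ≠ 0, η_λ(r) = (e^{2λr} − 1)/(2λ), and M = ℝⁿ × ℝⁿ × ℝ. Define the operator V_Θ on complex-valued functions on M × M by (V_Θξ)(x,y,r;x',y',r') = e^{−nλr'}·exp(−2πi·η_λ(r')·⟨e^{−λr'}x, y' − e^{−λr'}y⟩)·ξ(e^{−λr'}x, e^{−λr'}y, r+r'; x'−e^{−λr'}x, y'−e^{−λr'}y, r'). Then V_Θ satisfies the pentagon equation: (V_Θ)₁₂ ∘ (V_Θ)₁₃ ∘ (V_Θ)₂₃ = (V_Θ)₂₃ ∘ (V_Θ)₁₂ as operators on complex-valued functions on M × M × M. -/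
import Mathlib


open scoped BigOperators

noncomputable section

/-- `M = ℝⁿ × ℝⁿ × ℝ`, with coordinates `(x,y,r)`. -/
abbrev M (n : ℕ) : Type := (Fin n → ℝ) × (Fin n → ℝ) × ℝ

/-- `η_λ(r) = (e^{2λr} − 1)/(2λ)`. -/
def etaLam (lam r : ℝ) : ℝ := (Real.exp (2 * lam * r) - 1) / (2 * lam)

/-- The operator `V_Θ` on functions on `M × M`:
`(V_Θξ)(x,y,r;x',y',r') = e^{−nλr'}·exp(−2πi·η_λ(r')·⟨e^{−λr'}x, y'−e^{−λr'}y⟩)·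
ξ(e^{−λr'}x, e^{−λr'}y, r+r'; x'−e^{−λr'}x, y'−e^{−λr'}y, r')`. -/
def Vθ (n : ℕ) (lam : ℝ) (ξ : M n × M n → ℂ) : M n × M n → ℂ := fun v =>
  let x := v.1.1; let y := v.1.2.1; let r := v.1.2.2
  let x' := v.2.1; let y' := v.2.2.1; let r' := v.2.2.2
  (Real.exp (-((n : ℝ) * lam * r')) : ℂ)
    * Complex.exp (-(2 * Real.pi * Complex.I) * (etaLam lam r' : ℂ)
        * ((∑ i, (Real.exp (-(lam * r')) * x i) * (y' i - Real.exp (-(lam * r')) * y i) : ℝ) : ℂ))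
    * ξ ((Real.exp (-(lam * r')) • x, Real.exp (-(lam * r')) • y, r + r'),
         (x' - Real.exp (-(lam * r')) • x, y' - Real.exp (-(lam * r')) • y, r'))

/-- The leg operator `W₁₂` on functions on `M × M × M`. -/
def leg12 {n : ℕ} (W : (M n × M n → ℂ) → (M n × M n → ℂ)) :
    (M n × M n × M n → ℂ) → (M n × M n × M n → ℂ) := fun ξ p =>
  W (fun q => ξ (q.1, q.2, p.2.2)) (p.1, p.2.1)

/-- The leg operator `W₁₃` on functions on `M × M × M`. -/
def leg13 {n : ℕ} (W : (M n × M n → ℂ) → (M n × M n → ℂ)) :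
    (M n × M n × M n → ℂ) → (M n × M n × M n → ℂ) := fun ξ p =>
  W (fun q => ξ (q.1, p.2.1, q.2)) (p.1, p.2.2)

/-- The leg operator `W₂₃` on functions on `M × M × M`. -/
def leg23 {n : ℕ} (W : (M n × M n → ℂ) → (M n × M n → ℂ)) :
    (M n × M n × M n → ℂ) → (M n × M n × M n → ℂ) := fun ξ p =>
  W (fun q => ξ (p.1, q.1, q.2)) (p.2.1, p.2.2)

private lemma aux_mul (a b c d e z : ℂ) (h : a * b * c = d * e) :
    a * (b * (c * z)) = d * (e * z) := by linear_combination z * h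

/-- `V_Θ` satisfies the pentagon equation
`(V_Θ)₁₂ (V_Θ)₁₃ (V_Θ)₂₃ = (V_Θ)₂₃ (V_Θ)₁₂`. -/
theorem Vθ_pentagon (n : ℕ) (hn : 1 ≤ n) (lam : ℝ) (hlam : lam ≠ 0) :
    leg12 (Vθ n lam) ∘ leg13 (Vθ n lam) ∘ leg23 (Vθ n lam)
      = leg23 (Vθ n lam) ∘ leg12 (Vθ n lam) := by
  funext ξ p
  obtain ⟨⟨x1,y1,r1⟩, ⟨x2,y2,r2⟩, ⟨x3,y3,r3⟩⟩ := p
  have hb : Real.exp (-(lam*(r2+r3))) = Real.exp (-(lam*r3)) * Real.exp (-(lam*r2)) := by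
    rw [← Real.exp_add]; ring_nf
  simp only [Function.comp_apply, leg12, leg13, leg23, Vθ, Pi.smul_apply, Pi.sub_apply,
    smul_eq_mul]
  rw [hb]
  simp only [smul_smul, smul_sub, sub_sub_sub_cancel_right, add_assoc]
  apply aux_mul
  have hE3 : Real.exp (2*lam*r3) * (Real.exp (-(lam*r3)) * Real.exp (-(lam*r3))) = 1 := by
    rw [← Real.exp_add, ← Real.exp_add, show 2*lam*r3 + (-(lam*r3) + -(lam*r3)) = 0 by ring,
      Real.exp_zero]
  have heta : etaLam lam (r2+r3) = etaLam lam r3 + Real.exp (2*lam*r3) * etaLam lam r2 := by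
    have hsplit : Real.exp (2*lam*(r2+r3)) = Real.exp (2*lam*r2) * Real.exp (2*lam*r3) := by
      rw [← Real.exp_add]; ring_nf
    unfold etaLam
    field_simp
    linear_combination hsplit
  have key : etaLam lam r2 * (∑ x : Fin n, Real.exp (-(lam*r2)) * x1 x * (y2 x - Real.exp (-(lam*r2)) * y1 x))
      + etaLam lam r3 * (∑ x : Fin n, Real.exp (-(lam*r3)) * (Real.exp (-(lam*r2)) * x1 x) * (y3 x - Real.exp (-(lam*r3)) * (Real.exp (-(lam*r2)) * y1 x)))
      + etaLam lam r3 * (∑ x : Fin n, Real.exp (-(lam*r3)) * (x2 x - Real.exp (-(lam*r2)) * x1 x) * (y3 x - Real.exp (-(lam*r3)) * (Real.exp (-(lam*r2)) * y1 x) - Real.exp (-(lam*r3)) * (y2 x - Real.exp (-(lam*r2)) * y1 x)))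
      = etaLam lam r3 * (∑ x : Fin n, Real.exp (-(lam*r3)) * x2 x * (y3 x - Real.exp (-(lam*r3)) * y2 x))
      + etaLam lam (r2+r3) * (∑ x : Fin n, Real.exp (-(lam*r3)) * Real.exp (-(lam*r2)) * x1 x * (Real.exp (-(lam*r3)) * y2 x - Real.exp (-(lam*r3)) * Real.exp (-(lam*r2)) * y1 x)) := by
    rw [heta]
    simp only [add_mul, Finset.mul_sum, ← Finset.sum_add_distrib]
    refine Finset.sum_congr rfl fun i _ => ?_
    linear_combination (-(etaLam lam r2 * Real.exp (-(lam*r2)) * x1 i * y2 i)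
      + etaLam lam r2 * Real.exp (-(lam*r2))^2 * x1 i * y1 i) * hE3
  have keyC := congrArg (fun t : ℝ => (t : ℂ)) key
  simp only [Complex.ofReal_exp, ← Complex.exp_add]
  congr 1
  push_cast at keyC ⊢
  linear_combination (-(2*(Real.pi:ℂ)*Complex.I)) * keyC

end
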